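/- arXiv:1105.3770 — 2 statements merged into one kernel-verified Lean document; each statement's English description precedes it below -/
import Mathlib

section
/- Let Y_1,...,Y_n be nonnegative independent random variables with finite second moments, and let S be their sum. Then for every t > 0, the probability that E[S] - S ≥ t is at most exp(-t^2 / (2 · sum_{i=1}^n E[Y_i^2])). -/
/-!
For `x ≥ 0`, `exp (-x) ≤ 1 - x + x² / 2`; this is where nonnegativity enters, and why only second
moments appear. Hence for `c ≥ 0`,
`E[exp (-c Yᵢ)] ≤ 1 - c E[Yᵢ] + c² E[Yᵢ²] / 2 ≤ exp (-c E[Yᵢ] + c² E[Yᵢ²] / 2)`.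
By independence the moment generating function of `S` at `-c` is the product of these, and
Chernoff's bound for the lower tail, optimised at `c = t / ∑ E[Yᵢ²]`, gives the result.
-/

open MeasureTheory ProbabilityTheory Real

theorem Real.exp_neg_le_one_sub_add_sq_div_two {x : ℝ} (hx : 0 ≤ x) :
    exp (-x) ≤ 1 - x + x ^ 2 / 2 := by
  have h_deriv (y : ℝ) : HasDerivAt (fun y : ℝ => 1 - y + y ^ 2 / 2 - exp (-y))
      (-1 + y + exp (-y)) y := by
    refine ((((hasDerivAt_id' y).const_sub 1).add
      (((hasDerivAt_id' y).pow 2).div_const 2)).sub (hasDerivAt_neg y).exp).congr_deriv ?_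
    simp
  have h_mono : Monotone fun y : ℝ => 1 - y + y ^ 2 / 2 - exp (-y) :=
    monotone_of_deriv_nonneg (fun y => (h_deriv y).differentiableAt) fun y => by
      rw [(h_deriv y).deriv]
      linarith [add_one_le_exp (-y)]
  simpa using h_mono hx

namespace ProbabilityTheory

variable {Ω : Type*} {mΩ : MeasurableSpace Ω} {μ : Measure Ω} {X : Ω → ℝ} {c : ℝ}

lemma integrable_exp_neg_mul_of_nonneg [IsFiniteMeasure μ] (hXm : AEMeasurable X μ)
    (hX : 0 ≤ᵐ[μ] X) (hc : 0 ≤ c) : Integrable (fun ω => exp (-c * X ω)) μ := by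
  refine .of_mem_Icc 0 1 (measurable_exp.comp_aemeasurable (hXm.const_mul (-c))) ?_
  filter_upwards [hX] with ω hω
  exact ⟨(exp_pos _).le, exp_le_one_iff.2 (mul_nonpos_of_nonpos_of_nonneg (neg_nonpos.2 hc) hω)⟩

lemma mgf_neg_le_exp_of_nonneg [IsProbabilityMeasure μ] (hX : 0 ≤ᵐ[μ] X) (hL2 : MemLp X 2 μ)
    (hc : 0 ≤ c) :
    mgf X μ (-c) ≤ exp (-c * ∫ ω, X ω ∂μ + c ^ 2 * (∫ ω, X ω ^ 2 ∂μ) / 2) := by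
  have h_int : Integrable X μ := hL2.integrable one_le_two
  have h_lin_int : Integrable (fun ω => 1 - c * X ω) μ :=
    (integrable_const 1).sub (h_int.const_mul c)
  have h_sq_int : Integrable (fun ω => c ^ 2 * X ω ^ 2 / 2) μ :=
    (hL2.integrable_sq.const_mul _).div_const 2
  calc mgf X μ (-c)
      ≤ ∫ ω, 1 - c * X ω + c ^ 2 * X ω ^ 2 / 2 ∂μ := by
        refine integral_mono_ae
          (integrable_exp_neg_mul_of_nonneg hL2.aestronglyMeasurable.aemeasurable hX hc)
          (h_lin_int.add h_sq_int) ?_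
        filter_upwards [hX] with ω hω
        have := exp_neg_le_one_sub_add_sq_div_two (mul_nonneg hc hω)
        rw [neg_mul]
        linarith
    _ = 1 + (-c * ∫ ω, X ω ∂μ + c ^ 2 * (∫ ω, X ω ^ 2 ∂μ) / 2) := by
        rw [integral_add h_lin_int h_sq_int, integral_sub (integrable_const 1) (h_int.const_mul c),
          integral_div, integral_const_mul, integral_const_mul, integral_const, probReal_univ,
          smul_eq_mul, mul_one]
        ring
    _ ≤ _ := by linarith [add_one_le_exp (-c * ∫ ω, X ω ∂μ + c ^ 2 * (∫ ω, X ω ^ 2 ∂μ) / 2)]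

lemma iIndepFun.mgf_sum_neg_le_exp_of_nonneg {ι : Type*} {X : ι → Ω → ℝ}
    (h_indep : iIndepFun X μ) (hX : ∀ i, 0 ≤ᵐ[μ] X i) (hL2 : ∀ i, MemLp (X i) 2 μ)
    (s : Finset ι) (hc : 0 ≤ c) :
    mgf (∑ i ∈ s, X i) μ (-c) ≤ exp (-c * ∑ i ∈ s, ∫ ω, X i ω ∂μ
      + c ^ 2 * (∑ i ∈ s, ∫ ω, X i ω ^ 2 ∂μ) / 2) := by
  have := h_indep.isProbabilityMeasure
  rw [h_indep.mgf_sum₀ (fun i => (hL2 i).aestronglyMeasurable.aemeasurable), Finset.mul_sum,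
    Finset.mul_sum, Finset.sum_div, ← Finset.sum_add_distrib, exp_sum]
  exact Finset.prod_le_prod (fun _ _ => mgf_nonneg)
    fun i _ => mgf_neg_le_exp_of_nonneg (hX i) (hL2 i) hc

lemma measureReal_le_sub_le_exp_of_mgf_neg_le [IsFiniteMeasure μ] {m v t : ℝ} (hv : 0 < v)
    (ht : 0 ≤ t) (h_int : ∀ c, 0 ≤ c → Integrable (fun ω => exp (-c * X ω)) μ)
    (h_mgf : ∀ c, 0 ≤ c → mgf X μ (-c) ≤ exp (-c * m + c ^ 2 * v / 2)) :
    μ.real {ω | X ω ≤ m - t} ≤ exp (-t ^ 2 / (2 * v)) := by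
  have hc : 0 ≤ t / v := div_nonneg ht hv.le
  calc μ.real {ω | X ω ≤ m - t}
      ≤ exp (-(-(t / v)) * (m - t)) * mgf X μ (-(t / v)) :=
        measure_le_le_exp_mul_mgf _ (neg_nonpos.2 hc) (h_int _ hc)
    _ ≤ exp (-(-(t / v)) * (m - t)) * exp (-(t / v) * m + (t / v) ^ 2 * v / 2) := by
        gcongr
        exact h_mgf _ hc
    _ = exp (-t ^ 2 / (2 * v)) := by
        rw [← exp_add]
        congr 1
        field_simp
        ring

end ProbabilityTheory

theorem maurer_inequality_general {Ω : Type*} [MeasureSpace Ω]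
    [IsProbabilityMeasure (ℙ : Measure Ω)] {n : ℕ} (Y : Fin n → Ω → ℝ)
    (hnn : ∀ i ω, 0 ≤ Y i ω)
    (hind : iIndepFun Y ℙ)
    (hL2 : ∀ i, MemLp (Y i) 2 ℙ)
    {t : ℝ} (ht : 0 < t) :
    (ℙ {ω | t ≤ (∑ i, ∫ ω', Y i ω' ∂ℙ) - ∑ i, Y i ω}).toReal ≤
      Real.exp (-t ^ 2 / (2 * ∑ i, ∫ ω', Y i ω' ^ 2 ∂ℙ)) := by
  have hY : ∀ i, 0 ≤ᵐ[ℙ] Y i := fun i => ae_of_all _ (hnn i)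
  have hv_nonneg : 0 ≤ ∑ i, ∫ ω, Y i ω ^ 2 ∂ℙ :=
    Finset.sum_nonneg fun i _ => integral_nonneg fun ω => sq_nonneg _
  rcases hv_nonneg.eq_or_lt with hv_zero | hv_pos
  · rw [← hv_zero, mul_zero, div_zero, exp_zero]
    exact measureReal_le_one
  have h_set : {ω | t ≤ (∑ i, ∫ ω', Y i ω' ∂ℙ) - ∑ i, Y i ω}
      = {ω | (∑ i, Y i) ω ≤ (∑ i, ∫ ω', Y i ω' ∂ℙ) - t} := by
    ext ω
    simp only [Set.mem_ofPred_eq, Finset.sum_apply]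
    constructor <;> intro h <;> linarith
  have hS_meas : AEMeasurable (∑ i, Y i) ℙ :=
    Finset.aemeasurable_sum _ fun i _ => (hL2 i).aestronglyMeasurable.aemeasurable
  have hS : 0 ≤ᵐ[ℙ] ∑ i, Y i :=
    ae_of_all _ (show 0 ≤ ∑ i, Y i from Finset.sum_nonneg fun i _ => hnn i)
  rw [h_set]
  exact measureReal_le_sub_le_exp_of_mgf_neg_le hv_pos ht.le
    (fun c hc => integrable_exp_neg_mul_of_nonneg hS_meas hS hc)
    fun c hc => hind.mgf_sum_neg_le_exp_of_nonneg hY hL2 Finset.univ hc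

/-- **Maurer's inequality.** If `Y₁,…,Yₙ` are nonnegative independent
random variables with finite second moments and `S = ∑ Yᵢ`, then for every `t > 0`,
`P[E[S] - S ≥ t] ≤ exp(-t² / (2 ∑ E[Yᵢ²]))`. -/
theorem maurer_inequality {Ω : Type*} [MeasureSpace Ω]
    [IsProbabilityMeasure (ℙ : Measure Ω)] {n : ℕ} (Y : Fin n → Ω → ℝ)
    (hnn : ∀ i ω, 0 ≤ Y i ω)
    (hind : iIndepFun Y ℙ)
    (hmeas : ∀ i, Measurable (Y i))
    (hL2 : ∀ i, MemLp (Y i) 2 ℙ)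
    {t : ℝ} (ht : 0 < t) :
    (ℙ {ω | t ≤ (∑ i, ∫ ω', Y i ω' ∂ℙ) - ∑ i, Y i ω}).toReal ≤
      Real.exp (-t ^ 2 / (2 * ∑ i, ∫ ω', Y i ω' ^ 2 ∂ℙ)) :=
  maurer_inequality_general Y hnn hind hL2 ht
end

section
/- Let Z = f(X_1,...,X_m) where X_1,...,X_m are independent random variables, and for each i let Z'_i = f(X_1,...,X'_i,...,X_m) where X'_i is an independent copy of X_i. Then Var[Z] ≤ (1/2)·sum_{i=1}^m E[(Z - Z'_i)^2]. -/
/-! Realize `X` and an independent copy `X'` as the two factors of `μ ⊗ μ`, `μ = Measure.pi ν`,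
and let `X^s = s.piecewise X' X` be `X` with the coordinates in `s` resampled from `X'`. Then
`Var f = E[f(X)²] - E[f(X) f(X^univ)]` telescopes as coordinates are added to `s` one at a time.
For `i ∉ s`, swapping the `i`-th coordinates of `X` and `X'` preserves `μ ⊗ μ` and exchanges
`X^s ↔ X^(insert i s)` and `X ↔ X^{i}`, so the increment `E[f(X) (f(X^s) - f(X^(insert i s)))]`
equals `½ E[(f(X) - f(X^{i})) (f(X^s) - f(X^(insert i s)))]`. By AM–GM it is at most
`½ E[(f(X) - f(X^{i}))²]`, since swapping the coordinates in `s` carries the pair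
`(X^s, X^(insert i s))` to `(X, X^{i})`. -/

open MeasureTheory ProbabilityTheory Function

namespace EfronStein

lemma integral_mul_sub_integral_mul_le {α : Type*} [MeasurableSpace α] {P : Measure α}
    {a b c d : α → ℝ} (ha : MemLp a 2 P) (hb : MemLp b 2 P) (hc : MemLp c 2 P)
    (hd : MemLp d 2 P)
    (hswap : ∫ x, a x * (c x - d x) ∂P = ∫ x, b x * (d x - c x) ∂P)
    (hsq : ∫ x, (c x - d x) ^ 2 ∂P = ∫ x, (a x - b x) ^ 2 ∂P) :
    ∫ x, a x * c x ∂P - ∫ x, a x * d x ∂P ≤ 1 / 2 * ∫ x, (a x - b x) ^ 2 ∂P := by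
  have hdouble : ∫ x, (a x - b x) * (c x - d x) ∂P = 2 * ∫ x, a x * (c x - d x) ∂P := by
    have hacd : Integrable (fun x => a x * (c x - d x)) P := ha.integrable_mul (hc.sub hd)
    have hbdc : Integrable (fun x => b x * (d x - c x)) P := hb.integrable_mul (hd.sub hc)
    rw [two_mul]
    nth_rw 2 [hswap]
    rw [← integral_add hacd hbdc]
    congr with x
    ring
  have hab2 : Integrable (fun x => (a x - b x) ^ 2) P := (ha.sub hb).integrable_sq
  have hcd2 : Integrable (fun x => (c x - d x) ^ 2) P := (hc.sub hd).integrable_sq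
  have hamgm : ∫ x, (a x - b x) * (c x - d x) ∂P ≤
      ∫ x, ((a x - b x) ^ 2 + (c x - d x) ^ 2) / 2 ∂P :=
    integral_mono ((ha.sub hb).integrable_mul (hc.sub hd)) ((hab2.add hcd2).div_const 2)
      fun x => by nlinarith [sq_nonneg (a x - b x - (c x - d x))]
  rw [integral_div, integral_add hab2 hcd2, hsq] at hamgm
  have hac : Integrable (fun x => a x * c x) P := ha.integrable_mul hc
  have had : Integrable (fun x => a x * d x) P := ha.integrable_mul hd
  rw [← integral_sub hac had]
  simp_rw [← mul_sub]
  linarith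

variable {ι : Type*} [DecidableEq ι] {E : ι → Type*}

def swapCoords (s : Finset ι) (p : (∀ i, E i) × (∀ i, E i)) : (∀ i, E i) × (∀ i, E i) :=
  (s.piecewise p.2 p.1, s.piecewise p.1 p.2)

lemma swapCoords_involutive (s : Finset ι) : Involutive (swapCoords (E := E) s) := by
  intro p
  ext j <;> by_cases hj : j ∈ s <;> simp [swapCoords, hj]

lemma swapCoords_singleton_fst (i : ι) (p : (∀ i, E i) × (∀ i, E i)) :
    (swapCoords {i} p).1 = update p.1 i (p.2 i) :=
  Finset.piecewise_singleton _ _ _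

lemma piecewise_swapCoords_singleton {s : Finset ι} {i : ι} (hi : i ∉ s)
    (p : (∀ i, E i) × (∀ i, E i)) :
    s.piecewise (swapCoords {i} p).2 (swapCoords {i} p).1 = (insert i s).piecewise p.2 p.1 := by
  ext j
  by_cases hj : j = i
  · subst hj
    simp [swapCoords, hi]
  · by_cases hjs : j ∈ s <;> simp [swapCoords, hj, hjs]

lemma piecewise_insert_swapCoords_singleton {s : Finset ι} {i : ι} (hi : i ∉ s)
    (p : (∀ i, E i) × (∀ i, E i)) :
    (insert i s).piecewise (swapCoords {i} p).2 (swapCoords {i} p).1 = s.piecewise p.2 p.1 := by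
  ext j
  by_cases hj : j = i
  · subst hj
    simp [swapCoords, hi]
  · by_cases hjs : j ∈ s <;> simp [swapCoords, hj, hjs]

lemma update_swapCoords {s : Finset ι} {i : ι} (hi : i ∉ s) (p : (∀ i, E i) × (∀ i, E i)) :
    update (swapCoords s p).1 i ((swapCoords s p).2 i) = (insert i s).piecewise p.2 p.1 := by
  simp [swapCoords, Finset.piecewise_insert, hi]

variable [∀ i, MeasurableSpace (E i)]

lemma measurable_piecewise_fst_snd (s : Finset ι) :
    Measurable fun p : (∀ i, E i) × (∀ i, E i) => s.piecewise p.1 p.2 :=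
  measurable_pi_lambda _ fun j => by
    by_cases hj : j ∈ s <;> simp only [Finset.piecewise, hj, if_true, if_false] <;> fun_prop

lemma measurable_swapCoords (s : Finset ι) : Measurable (swapCoords (E := E) s) :=
  ((measurable_piecewise_fst_snd s).comp measurable_swap).prodMk
    (measurable_piecewise_fst_snd s)

lemma measurePreserving_swapCoords [Fintype ι] (ν : ∀ i, Measure (E i))
    [∀ i, SigmaFinite (ν i)] (s : Finset ι) :
    MeasurePreserving (swapCoords s) ((Measure.pi ν).prod (Measure.pi ν))
      ((Measure.pi ν).prod (Measure.pi ν)) := by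
  refine ⟨measurable_swapCoords s, (Measure.prod_eq_generateFrom generateFrom_pi generateFrom_pi
    isPiSystem_pi isPiSystem_pi (.pi fun i => (ν i).toFiniteSpanningSetsIn)
    (.pi fun i => (ν i).toFiniteSpanningSetsIn) ?_).symm⟩
  rintro _ ⟨t₁, ht₁, rfl⟩ _ ⟨t₂, ht₂, rfl⟩
  have hpre : swapCoords s ⁻¹' (Set.univ.pi t₁ ×ˢ Set.univ.pi t₂) =
      Set.univ.pi (s.piecewise t₂ t₁) ×ˢ Set.univ.pi (s.piecewise t₁ t₂) := by
    ext p
    simp only [swapCoords, Set.mem_preimage, Set.mem_prod, Set.mem_univ_pi, ← forall_and]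
    refine forall_congr' fun j => ?_
    by_cases hj : j ∈ s <;> simp [hj, and_comm]
  have hbox : MeasurableSet (Set.univ.pi t₁ ×ˢ Set.univ.pi t₂) :=
    (MeasurableSet.univ_pi (Set.mem_univ_pi.1 ht₁)).prod
      (MeasurableSet.univ_pi (Set.mem_univ_pi.1 ht₂))
  rw [Measure.map_apply (measurable_swapCoords s) hbox, hpre, Measure.prod_prod, Measure.pi_pi,
    Measure.pi_pi, Measure.pi_pi, Measure.pi_pi, ← Finset.prod_mul_distrib,
    ← Finset.prod_mul_distrib]
  refine Finset.prod_congr rfl fun j _ => ?_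
  by_cases hj : j ∈ s <;> simp [hj, mul_comm]

section Probability

variable [Fintype ι] (ν : ∀ i, Measure (E i)) [∀ i, IsProbabilityMeasure (ν i)]
  {f : (∀ i, E i) → ℝ}

lemma measurePreserving_piecewise (s : Finset ι) :
    MeasurePreserving (fun p : (∀ i, E i) × (∀ i, E i) => s.piecewise p.2 p.1)
      ((Measure.pi ν).prod (Measure.pi ν)) (Measure.pi ν) :=
  measurePreserving_fst.comp (measurePreserving_swapCoords ν s)

lemma measurePreserving_update (i : ι) :
    MeasurePreserving (fun p : (∀ i, E i) × (∀ i, E i) => update p.1 i (p.2 i))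
      ((Measure.pi ν).prod (Measure.pi ν)) (Measure.pi ν) := by
  simpa only [Finset.piecewise_singleton] using measurePreserving_piecewise ν {i}

lemma integral_comp_swapCoords (s : Finset ι) (g : (∀ i, E i) × (∀ i, E i) → ℝ) :
    ∫ p, g (swapCoords s p) ∂(Measure.pi ν).prod (Measure.pi ν) =
      ∫ p, g p ∂(Measure.pi ν).prod (Measure.pi ν) :=
  (measurePreserving_swapCoords ν s).integral_comp (MeasurableEquiv.ofInvolutive _
    (swapCoords_involutive s) (measurable_swapCoords s)).measurableEmbedding g

lemma integral_mul_piecewise_sub_insert_le (hf : MemLp f 2 (Measure.pi ν)) {s : Finset ι}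
    {i : ι} (hi : i ∉ s) :
    ∫ p, f p.1 * f (s.piecewise p.2 p.1) ∂(Measure.pi ν).prod (Measure.pi ν) -
        ∫ p, f p.1 * f ((insert i s).piecewise p.2 p.1) ∂(Measure.pi ν).prod (Measure.pi ν) ≤
      1 / 2 * ∫ p, (f p.1 - f (update p.1 i (p.2 i))) ^ 2
        ∂(Measure.pi ν).prod (Measure.pi ν) := by
  have hL2 (t : Finset ι) : MemLp (fun p => f (t.piecewise p.2 p.1)) 2
      ((Measure.pi ν).prod (Measure.pi ν)) :=
    hf.comp_measurePreserving (measurePreserving_piecewise ν t)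
  refine integral_mul_sub_integral_mul_le (hf.comp_measurePreserving measurePreserving_fst)
    (hf.comp_measurePreserving (measurePreserving_update ν i)) (hL2 s) (hL2 _) ?_ ?_
  · rw [← integral_comp_swapCoords ν {i}]
    simp only [piecewise_swapCoords_singleton hi, piecewise_insert_swapCoords_singleton hi]
    simp only [swapCoords_singleton_fst]
  · rw [← integral_comp_swapCoords ν s fun p => (f p.1 - f (update p.1 i (p.2 i))) ^ 2]
    simp only [update_swapCoords hi]
    rfl

lemma integral_mul_self_sub_integral_mul_piecewise_le (hf : MemLp f 2 (Measure.pi ν))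
    (s : Finset ι) :
    ∫ p, f p.1 * f p.1 ∂(Measure.pi ν).prod (Measure.pi ν) -
        ∫ p, f p.1 * f (s.piecewise p.2 p.1) ∂(Measure.pi ν).prod (Measure.pi ν) ≤
      1 / 2 * ∑ i ∈ s, ∫ p, (f p.1 - f (update p.1 i (p.2 i))) ^ 2
        ∂(Measure.pi ν).prod (Measure.pi ν) := by
  induction s using Finset.induction_on with
  | empty => simp
  | insert i s hi ih =>
    rw [Finset.sum_insert hi, mul_add]
    linarith [integral_mul_piecewise_sub_insert_le ν hf hi]

lemma integral_sq_sub_update (hfm : Measurable f) (hf : MemLp f 2 (Measure.pi ν)) (i : ι) :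
    ∫ p, (f p.1 - f (update p.1 i (p.2 i))) ^ 2 ∂(Measure.pi ν).prod (Measure.pi ν) =
      ∫ x, ∫ y, (f x - f (update x i y)) ^ 2 ∂ν i ∂Measure.pi ν := by
  have hint : Integrable (fun p : (∀ i, E i) × (∀ i, E i) =>
      (f p.1 - f (update p.1 i (p.2 i))) ^ 2) ((Measure.pi ν).prod (Measure.pi ν)) :=
    ((hf.comp_measurePreserving measurePreserving_fst).sub
      (hf.comp_measurePreserving (measurePreserving_update ν i))).integrable_sq
  rw [integral_prod _ hint]
  refine integral_congr_ae (.of_forall fun x => ?_)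
  have hmeas : Measurable fun y => (f x - f (update x i y)) ^ 2 := by fun_prop
  exact integral_comp_eval hmeas.aestronglyMeasurable

end Probability

end EfronStein

open EfronStein in
/-- **Efron–Stein inequality.** For a function `f` of `m` independent
random variables (realized canonically on a product probability space),
`Var[Z] ≤ (1/2) ∑ᵢ E[(Z - Z'ᵢ)²]`, where `Z'ᵢ` is obtained by resampling the `i`-th
coordinate independently. -/
theorem efron_stein {m : ℕ} {E : Fin m → Type*} [∀ i, MeasurableSpace (E i)]
    (ν : ∀ i, Measure (E i)) [∀ i, IsProbabilityMeasure (ν i)]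
    (f : (∀ i, E i) → ℝ) (hf : Measurable f) (hf2 : MemLp f 2 (Measure.pi ν)) :
    variance f (Measure.pi ν) ≤
      (1 / 2) * ∑ i, ∫ x, ∫ y, (f x - f (Function.update x i y)) ^ 2
        ∂(ν i) ∂(Measure.pi ν) := by
  calc variance f (Measure.pi ν)
      = ∫ p, f p.1 * f p.1 ∂(Measure.pi ν).prod (Measure.pi ν) -
          ∫ p, f p.1 * f (Finset.univ.piecewise p.2 p.1)
            ∂(Measure.pi ν).prod (Measure.pi ν) := by
        simp only [Finset.piecewise_univ]
        rw [variance_eq_sub hf2, integral_prod_mul f f, integral_fun_fst fun x => f x * f x]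
        simp [sq]
    _ ≤ 1 / 2 * ∑ i, ∫ p, (f p.1 - f (update p.1 i (p.2 i))) ^ 2
          ∂(Measure.pi ν).prod (Measure.pi ν) :=
        integral_mul_self_sub_integral_mul_piecewise_le ν hf2 Finset.univ
    _ = _ := by simp_rw [integral_sq_sub_update ν hf hf2]
end
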